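/- arXiv:2505.17939 — 4 statements merged into one kernel-verified Lean document; each statement's English description precedes it below -/
import Mathlib

section
/- Refinement by disjoint unions for relational Weisfeiler–Leman colorings: let S be a finite set, let 𝓐 = (R_a)_{a∈A} and 𝓑 = (Q_b)_{b∈B} be finite indexed families of binary relations on S, and suppose that for each b ∈ B there is a subset F_b ⊆ A such that the relations (R_a)_{a∈F_b} are pairwise disjoint and Q_b = ⋃_{a∈F_b} R_a. Then for every iteration l ≥ 0 and all σ, τ ∈ S, if a^l(σ) = a^l(τ) then b^l(σ) = b^l(τ), where a^l and b^l denote the canonical relational WL colorings of S with respect to 𝓐 and 𝓑 respectively. -/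
universe u v

/-- The type of canonical relational Weisfeiler–Leman colors at iteration `l`, for a
family of relations indexed by `P`.  At iteration `0` there is a single color `⋆`;
at iteration `l+1` a color is a pair of the previous color together with, for each
relation index `p`, a multiset of previous colors (of the `R_p`-neighbors). -/
def WLColorType (P : Type u) : ℕ → Type u
  | 0 => PUnit
  | l + 1 => WLColorType P l × (P → Multiset (WLColorType P l))

open scoped Classical in
/-- The canonical relational WL coloring of a finite set `S` equipped with a family of
binary relations `R : P → S → S → Prop`:
`c⁰ σ = ⋆` and `c^{l+1} σ = (c^l σ, (⟦ c^l τ : (σ,τ) ∈ R_p ⟧)_{p ∈ P})`. -/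
noncomputable def wlColor {S : Type v} {P : Type u} [Fintype S]
    (R : P → S → S → Prop) : (l : ℕ) → S → WLColorType P l
  | 0 => fun _ => PUnit.unit
  | l + 1 => fun σ =>
      (wlColor R l σ,
       fun p => ((Finset.univ.filter (fun τ => R p σ τ)).val).map (wlColor R l))

/-! Induction on `l`. Since `Q_b` is the disjoint union of the `R_a`, `a ∈ F_b`, the multiset of
`Q_b`-neighbours of `σ` is the sum over `a ∈ F_b` of the multisets of `R_a`-neighbours. By the
induction hypothesis `b^l` factors through `a^l`, so the `b^l`-colors of each summand are a
recoloring of its `a^l`-colors, which `a^{l+1}(σ)` records. -/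

theorem Multiset.map_eq_map_of_factorsThrough {α β γ : Type*} {f : α → β} {g : α → γ}
    (hgf : g.FactorsThrough f) {s t : Multiset α} (h : s.map f = t.map f) :
    s.map g = t.map g := by
  rcases isEmpty_or_nonempty α with hα | ⟨⟨a⟩⟩
  · simp only [Multiset.eq_zero_of_forall_notMem (fun x => hα.elim x)]
  · have hg : g = Function.extend f g (fun _ => g a) ∘ f :=
      funext fun x => (hgf.extend_apply _ x).symm
    rw [hg, ← Multiset.map_map, ← Multiset.map_map, h]

theorem Finset.filter_val_eq_bind_of_iff_exists {α ι : Type*} (t : Finset α) (s : Finset ι)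
    (p : α → Prop) (q : ι → α → Prop) [DecidablePred p] [∀ a, DecidablePred (q a)]
    (hdisj : (s : Set ι).PairwiseDisjoint fun a => t.filter (q a))
    (hpq : ∀ x, p x ↔ ∃ a ∈ s, q a x) :
    (t.filter p).val = s.val.bind fun a => (t.filter (q a)).val := by
  rw [← Finset.disjiUnion_val s _ hdisj]
  congr 1
  ext x
  simp only [Finset.mem_filter, Finset.mem_disjiUnion, hpq]
  tauto

open scoped Classical in
theorem wlColor_succ_eq_iff {S : Type*} {P : Type*} [Fintype S] (R : P → S → S → Prop)
    (l : ℕ) (σ τ : S) :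
    wlColor R (l + 1) σ = wlColor R (l + 1) τ ↔ wlColor R l σ = wlColor R l τ ∧
      ∀ p, (Finset.univ.filter (R p σ)).val.map (wlColor R l) =
        (Finset.univ.filter (R p τ)).val.map (wlColor R l) :=
  Prod.mk_inj.trans (and_congr_right fun _ => funext_iff)

theorem wlColor_refinement_by_disjoint_unions_general
    {S : Type*} {ι κ : Type*} [Fintype S] [Fintype ι]
    (R : ι → S → S → Prop) (Q : κ → S → S → Prop) (F : κ → Set ι)
    (hdisj : ∀ b : κ, ∀ a₁ ∈ F b, ∀ a₂ ∈ F b, a₁ ≠ a₂ →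
      ∀ σ τ : S, ¬ (R a₁ σ τ ∧ R a₂ σ τ))
    (hunion : ∀ (b : κ) (σ τ : S), Q b σ τ ↔ ∃ a ∈ F b, R a σ τ) :
    ∀ (l : ℕ) (σ τ : S), wlColor R l σ = wlColor R l τ →
      wlColor Q l σ = wlColor Q l τ := by
  classical
  intro l
  induction l with
  | zero => exact fun _ _ _ => rfl
  | succ l ih =>
    intro σ τ h
    rw [wlColor_succ_eq_iff] at h ⊢
    refine ⟨ih σ τ h.1, fun b => ?_⟩
    have hQ (x : S) : (Finset.univ.filter (Q b x)).val =
        (F b).toFinset.val.bind fun a => (Finset.univ.filter (R a x)).val := by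
      refine Finset.filter_val_eq_bind_of_iff_exists _ _ _ _ ?_ (by simpa using hunion b x)
      intro a₁ h₁ a₂ h₂ hne
      simp only [Function.onFun, Finset.disjoint_filter]
      exact fun τ _ h₁' h₂' =>
        hdisj b a₁ (by simpa using h₁) a₂ (by simpa using h₂) hne x τ ⟨h₁', h₂'⟩
    simp only [hQ, Multiset.map_bind]
    exact Multiset.bind_congr fun a _ => Multiset.map_eq_map_of_factorsThrough ih (h.2 a)

/-- Refinement by disjoint unions for relational WL colorings: if every
relation `Q_b` of the family `𝓑` is a disjoint union `⋃_{a ∈ F b} R_a` of relations of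
the family `𝓐`, then for every iteration `l`, elements identified by the canonical WL
coloring of `𝓐` are identified by the canonical WL coloring of `𝓑`. -/
theorem wlColor_refinement_by_disjoint_unions
    {S : Type*} {ι κ : Type*} [Fintype S] [Fintype ι] [Fintype κ]
    (R : ι → S → S → Prop) (Q : κ → S → S → Prop) (F : κ → Set ι)
    (hdisj : ∀ b : κ, ∀ a₁ ∈ F b, ∀ a₂ ∈ F b, a₁ ≠ a₂ →
      ∀ σ τ : S, ¬ (R a₁ σ τ ∧ R a₂ σ τ))
    (hunion : ∀ (b : κ) (σ τ : S), Q b σ τ ↔ ∃ a ∈ F b, R a σ τ) :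
    ∀ (l : ℕ) (σ τ : S), wlColor R l σ = wlColor R l τ →
      wlColor Q l σ = wlColor Q l τ :=
  wlColor_refinement_by_disjoint_unions_general R Q F hdisj hunion
end

section
/- There exist two digraphs G = (V,E) and G' = (V',E'), each on 7 vertices with 14 edges and with every vertex having in-degree exactly 2 and out-degree exactly 2, such that G and G' are not isomorphic: the directed flag complex of G contains exactly 7 two-simplices (transitive 3-cliques), while the directed flag complex of G' contains none. -/
/-- Out-degree of a vertex in a digraph given by a finite edge set. -/
def outDeg {V : Type*} [Fintype V] [DecidableEq V] (E : Finset (V × V)) (v : V) : ℕ :=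
  (E.filter (fun e => e.1 = v)).card

/-- In-degree of a vertex in a digraph given by a finite edge set. -/
def inDeg {V : Type*} [Fintype V] [DecidableEq V] (E : Finset (V × V)) (v : V) : ℕ :=
  (E.filter (fun e => e.2 = v)).card

/-- The set of transitive 3-cliques of a digraph with edge set `E`: injective triples
`(u, v, w)` with `(u,v), (u,w), (v,w) ∈ E`.  These are exactly the 2-simplices of the
directed flag complex `K_G`. -/
def transTriples {V : Type*} [Fintype V] [DecidableEq V] (E : Finset (V × V)) :
    Finset (V × V × V) :=
  Finset.univ.filter (fun x : V × V × V =>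
    x.1 ≠ x.2.1 ∧ x.1 ≠ x.2.2 ∧ x.2.1 ≠ x.2.2 ∧
    (x.1, x.2.1) ∈ E ∧ (x.1, x.2.2) ∈ E ∧ (x.2.1, x.2.2) ∈ E)

/-!
Both digraphs are circulants on `ℤ/7`: `(u, v)` is an edge iff `v - u` lies in a connection
set `S`, which makes every in- and out-degree `#S`. A transitive triple `(u, u + s, u + s + t)`
needs `s, t, s + t ∈ S`; for `S = {1, 2}` this happens only for `s = t = 1`, giving one triple per
vertex, while `{1, 3}` is sum-free mod 7. Isomorphisms preserve the number of transitive triples.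
-/

open Finset

def circulantEdges (n : ℕ) [NeZero n] (S : Finset (Fin n)) : Finset (Fin n × Fin n) :=
  univ.filter fun e => e.2 - e.1 ∈ S

section Circulant

variable {n : ℕ} [NeZero n] (S : Finset (Fin n))

theorem mem_circulantEdges {u v : Fin n} : (u, v) ∈ circulantEdges n S ↔ v - u ∈ S := by
  simp [circulantEdges]

theorem circulantEdges_irrefl (h0 : (0 : Fin n) ∉ S) : ∀ e ∈ circulantEdges n S, e.1 ≠ e.2 := by
  rintro ⟨u, v⟩ he (rfl : u = v)
  simp_all [mem_circulantEdges]

theorem outDeg_circulantEdges (v : Fin n) : outDeg (circulantEdges n S) v = #S := by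
  refine card_nbij' (fun e => e.2 - v) (fun s => (v, v + s)) ?_ ?_ ?_ ?_ <;>
    intro e he <;> simp [circulantEdges] at he ⊢ <;> grind

theorem inDeg_circulantEdges (v : Fin n) : inDeg (circulantEdges n S) v = #S := by
  refine card_nbij' (fun e => v - e.1) (fun s => (v - s, v)) ?_ ?_ ?_ ?_ <;>
    intro e he <;> simp [circulantEdges] at he ⊢ <;> grind

theorem card_circulantEdges : #(circulantEdges n S) = n * #S := by
  rw [card_eq_sum_card_fiberwise (f := Prod.fst) (t := univ) (fun _ _ => mem_univ _)]
  exact (sum_congr rfl fun v _ => outDeg_circulantEdges S v).trans (by simp)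

end Circulant

theorem card_transTriples_congr {V W : Type*} [Fintype V] [DecidableEq V] [Fintype W]
    [DecidableEq W] {E : Finset (V × V)} {E' : Finset (W × W)} (ψ : V ≃ W)
    (hψ : ∀ u v, (u, v) ∈ E ↔ (ψ u, ψ v) ∈ E') :
    #(transTriples E) = #(transTriples E') :=
  card_equiv (ψ.prodCongr (ψ.prodCongr ψ)) fun ⟨u, v, w⟩ => by
    simp [transTriples, hψ]

/-- There exist two digraphs on 7 vertices, each with 14 edges and
with every vertex of in-degree exactly 2 and out-degree exactly 2, that are not
isomorphic: the directed flag complex of the first contains exactly 7 two-simplices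
(transitive 3-cliques), while that of the second contains none. -/
theorem exists_regular_digraphs_distinguished_by_transitive_cliques :
    ∃ E E' : Finset (Fin 7 × Fin 7),
      (∀ e ∈ E, e.1 ≠ e.2) ∧ (∀ e ∈ E', e.1 ≠ e.2) ∧
      E.card = 14 ∧ E'.card = 14 ∧
      (∀ v : Fin 7, outDeg E v = 2 ∧ inDeg E v = 2) ∧
      (∀ v : Fin 7, outDeg E' v = 2 ∧ inDeg E' v = 2) ∧
      (¬ ∃ ψ : Fin 7 ≃ Fin 7, ∀ u v : Fin 7, (u, v) ∈ E ↔ (ψ u, ψ v) ∈ E') ∧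
      (transTriples E).card = 7 ∧
      (transTriples E').card = 0 := by
  have h7 : #(transTriples (circulantEdges 7 {1, 2})) = 7 := by decide
  have h0 : #(transTriples (circulantEdges 7 {1, 3})) = 0 := by decide
  refine ⟨circulantEdges 7 {1, 2}, circulantEdges 7 {1, 3},
    circulantEdges_irrefl _ (by decide), circulantEdges_irrefl _ (by decide),
    card_circulantEdges _, card_circulantEdges _,
    fun v => ⟨outDeg_circulantEdges _ v, inDeg_circulantEdges _ v⟩,
    fun v => ⟨outDeg_circulantEdges _ v, inDeg_circulantEdges _ v⟩, ?_, h7, h0⟩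
  rintro ⟨ψ, hψ⟩
  have hcard := card_transTriples_congr ψ hψ
  omega
end

section
/- There exist non-isomorphic digraphs G = (V,E) and G' = (V',E') with |V| = |V'| such that, for every iteration l, the multiset {{c^l_G(v) : v ∈ V}} of canonical relational WL colors of G computed with respect to the relation family (R_out, R_in) equals the corresponding multiset {{c^l_{G'}(v) : v ∈ V'}} for G', while the directed flag complexes K_G and K_{G'} have different numbers of 2-simplices and hence are non-isomorphic. -/
universe u v

/-- The relation family `(R_out, R_in)` of a digraph with edge set `E`:
`R_out = E` and `R_in = {(u,v) : (v,u) ∈ E}`. -/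
def dirFam {V : Type*} (E : Finset (V × V)) : Fin 2 → V → V → Prop :=
  fun p u v => if p = 0 then (u, v) ∈ E else (v, u) ∈ E

/-!
Two disjoint bidirected triangles and the bidirected hexagon on six vertices both have every
out- and in-degree equal to 2. In such a regular digraph WL refinement never splits the initial
color class, since every vertex sees the same multiset of colors at every step, so the two
graphs are WL-indistinguishable. But each bidirected triangle carries all 3! = 6 orderings of
its vertices as transitive triples, giving 12 in total, whereas the hexagon has no triangles;
the number of 2-simplices is an isomorphism invariant.
-/

/-- The color every vertex receives when each relation `R p` is `d p`-regular. -/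
def regularColor {P : Type u} (d : P → ℕ) : (l : ℕ) → WLColorType P l
  | 0 => PUnit.unit
  | l + 1 => (regularColor d l, fun p => Multiset.replicate (d p) (regularColor d l))

open scoped Classical in
theorem wlColor_eq_regularColor {S : Type v} {P : Type u} [Fintype S]
    {R : P → S → S → Prop} {d : P → ℕ}
    (hR : ∀ p σ, (Finset.univ.filter (fun τ => R p σ τ)).card = d p) (l : ℕ) (σ : S) :
    wlColor R l σ = regularColor d l := by
  induction l generalizing σ with
  | zero => rfl
  | succ l ih =>
    refine Prod.ext (ih σ) (funext fun p => ?_)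
    change ((Finset.univ.filter (fun τ => R p σ τ)).val).map (wlColor R l) = _
    rw [Multiset.map_congr rfl fun τ _ => ih τ, Multiset.map_const', Finset.card_val, hR]
    rfl

open scoped Classical in
theorem map_wlColor_eq_of_regular {S : Type v} {P : Type u} [Fintype S]
    {R R' : P → S → S → Prop} {d : P → ℕ}
    (hR : ∀ p σ, (Finset.univ.filter (fun τ => R p σ τ)).card = d p)
    (hR' : ∀ p σ, (Finset.univ.filter (fun τ => R' p σ τ)).card = d p) (l : ℕ) :
    Finset.univ.val.map (wlColor R l) = Finset.univ.val.map (wlColor R' l) := by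
  rw [Multiset.map_congr rfl fun σ _ => wlColor_eq_regularColor hR l σ,
    Multiset.map_congr rfl fun σ _ => wlColor_eq_regularColor hR' l σ]

theorem card_transTriples_eq_of_iso {V W : Type*} [Fintype V] [DecidableEq V]
    [Fintype W] [DecidableEq W] {E : Finset (V × V)} {F : Finset (W × W)} (ψ : V ≃ W)
    (hψ : ∀ u v, (u, v) ∈ E ↔ (ψ u, ψ v) ∈ F) :
    (transTriples E).card = (transTriples F).card :=
  Finset.card_equiv (ψ.prodCongr (ψ.prodCongr ψ)) fun ⟨a, b, c⟩ => by
    simp [transTriples, hψ]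

open scoped Classical in
theorem card_filter_dirFam_of_regular {V : Type*} [Fintype V] [DecidableEq V]
    {E : Finset (V × V)} {k : ℕ} (hout : ∀ σ, (Finset.univ.filter fun τ => (σ, τ) ∈ E).card = k)
    (hin : ∀ σ, (Finset.univ.filter fun τ => (τ, σ) ∈ E).card = k) (p : Fin 2) (σ : V) :
    (Finset.univ.filter fun τ => dirFam E p σ τ).card = k := by
  by_cases hp : p = 0
  · simpa [dirFam, hp] using hout σ
  · simpa [dirFam, hp] using hin σ

def twoTriangles : Finset (Fin 6 × Fin 6) :=
  {(0,1),(1,0),(0,2),(2,0),(1,2),(2,1),(3,4),(4,3),(3,5),(5,3),(4,5),(5,4)}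

def hexagon : Finset (Fin 6 × Fin 6) :=
  {(0,1),(1,0),(1,2),(2,1),(2,3),(3,2),(3,4),(4,3),(4,5),(5,4),(5,0),(0,5)}

open scoped Classical in
theorem card_filter_dirFam_twoTriangles (p : Fin 2) (σ : Fin 6) :
    (Finset.univ.filter fun τ => dirFam twoTriangles p σ τ).card = 2 :=
  card_filter_dirFam_of_regular (by decide) (by decide) p σ

open scoped Classical in
theorem card_filter_dirFam_hexagon (p : Fin 2) (σ : Fin 6) :
    (Finset.univ.filter fun τ => dirFam hexagon p σ τ).card = 2 :=
  card_filter_dirFam_of_regular (by decide) (by decide) p σ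

theorem card_transTriples_twoTriangles : (transTriples twoTriangles).card = 12 := by decide

theorem transTriples_hexagon : transTriples hexagon = ∅ := by decide

/-- There exist non-isomorphic digraphs on the same number of vertices
whose canonical relational WL color multisets with respect to `(R_out, R_in)` agree at
every iteration, while their directed flag complexes have different numbers of
2-simplices (and hence are non-isomorphic). -/
theorem exists_wl_indistinguishable_digraphs_with_different_flag_complexes :
    ∃ (n : ℕ) (E E' : Finset (Fin n × Fin n)),
      (∀ e ∈ E, e.1 ≠ e.2) ∧ (∀ e ∈ E', e.1 ≠ e.2) ∧
      (¬ ∃ ψ : Fin n ≃ Fin n, ∀ u v : Fin n, (u, v) ∈ E ↔ (ψ u, ψ v) ∈ E') ∧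
      (∀ l : ℕ,
        Finset.univ.val.map (wlColor (dirFam E) l) =
          Finset.univ.val.map (wlColor (dirFam E') l)) ∧
      (transTriples E).card ≠ (transTriples E').card := by
  have hcard : (transTriples twoTriangles).card ≠ (transTriples hexagon).card := by
    rw [card_transTriples_twoTriangles, transTriples_hexagon]
    decide
  refine ⟨6, twoTriangles, hexagon, by decide, by decide, ?_, ?_, hcard⟩
  · rintro ⟨ψ, hψ⟩
    exact hcard (card_transTriples_eq_of_iso ψ hψ)
  · exact map_wlColor_eq_of_regular card_filter_dirFam_twoTriangles card_filter_dirFam_hexagon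
end

section
/- The higher-order directed adjacency count does not factor through symmetrization: there exist directed simplicial complexes K and K' on finite vertex sets that are not isomorphic as directed simplicial complexes, whose symmetrizations π(K) and π(K') are isomorphic as abstract simplicial complexes, and such that the number of ordered pairs (σ,τ) of 2-simplices with d_0(σ) = d_2(τ) in K differs from the corresponding number in K'. -/
/-- A (finite) directed simplicial complex on vertex type `V`, with directed simplices
represented as injective (nonempty, duplicate-free) lists: it contains every singleton
`[v]` and is closed under all face maps (deletion of the `i`-th vertex), which are
defined on simplices of dimension at least 1 (length at least 2). -/
def IsDirComplex {V : Type*} (K : Finset (List V)) : Prop :=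
  (∀ σ ∈ K, σ ≠ [] ∧ σ.Nodup) ∧
  (∀ v : V, [v] ∈ K) ∧
  (∀ σ ∈ K, 1 < σ.length → ∀ i : Fin σ.length, σ.eraseIdx i ∈ K)

/-- The symmetrization `π(K)`: the abstract simplicial complex whose faces are the
underlying vertex sets of the directed simplices of `K`. -/
def symmetrization {V : Type*} [DecidableEq V] (K : Finset (List V)) : Finset (Finset V) :=
  K.image List.toFinset

/-- The number of ordered pairs `(σ, τ)` of 2-simplices (length-3 directed simplices)
of `K` with `d_0 σ = d_2 τ`, i.e. the 0-th face of `σ` equals the 2-nd face of `τ`. -/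
def d0d2PairCount {V : Type*} [DecidableEq V] (K : Finset (List V)) : ℕ :=
  ((K ×ˢ K).filter (fun p : List V × List V =>
    p.1.length = 3 ∧ p.2.length = 3 ∧ p.1.eraseIdx 0 = p.2.eraseIdx 2)).card

/-! `triangle` carries the single directed 2-simplex `(0,1,2)`; `triangleWithRotation` adds its
rotation `(1,2,0)` together with the edges `(2,0)` and `(1,0)` this forces. Both symmetrize to the
full triangle on `{0,1,2}`, but `d₀(0,1,2) = (1,2) = d₂(1,2,0)` gives the second complex one
`d₀d₂`-pair where the first has none. They are not isomorphic, since a directed isomorphism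
preserves the number of simplices and the two complexes have 7 and 10. -/
theorem card_eq_card_of_map_mem_iff {V W : Type*} {K : Finset (List V)} {K' : Finset (List W)}
    (ψ : V ≃ W) (h : ∀ σ : List V, σ ∈ K ↔ σ.map ψ ∈ K') : K.card = K'.card :=
  Finset.card_nbij' (List.map ψ) (List.map ψ.symm) (fun σ hσ => (h σ).1 hσ)
    (fun τ hτ => (h _).2 (by simpa using hτ)) (fun σ _ => by simp) (fun τ _ => by simp)

def triangle : Finset (List (Fin 3)) :=
  {[0], [1], [2], [0, 1], [0, 2], [1, 2], [0, 1, 2]}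

def triangleWithRotation : Finset (List (Fin 3)) :=
  {[0], [1], [2], [0, 1], [0, 2], [1, 2], [2, 0], [1, 0], [0, 1, 2], [1, 2, 0]}

theorem isDirComplex_triangle : IsDirComplex triangle := by
  unfold IsDirComplex; decide

theorem isDirComplex_triangleWithRotation : IsDirComplex triangleWithRotation := by
  unfold IsDirComplex; decide

theorem symmetrization_triangleWithRotation :
    symmetrization triangleWithRotation = symmetrization triangle := by
  decide

theorem d0d2PairCount_triangle : d0d2PairCount triangle = 0 := by
  decide

theorem d0d2PairCount_triangleWithRotation : d0d2PairCount triangleWithRotation = 1 := by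
  decide

theorem not_dirIso_triangle_triangleWithRotation :
    ¬ ∃ ψ : Fin 3 ≃ Fin 3, ∀ σ : List (Fin 3), σ ∈ triangle ↔ σ.map ψ ∈ triangleWithRotation := by
  rintro ⟨ψ, h⟩
  have : triangle.card = triangleWithRotation.card := card_eq_card_of_map_mem_iff ψ h
  exact absurd this (by decide)

/-- The higher-order directed adjacency count does not factor through
symmetrization: there exist directed simplicial complexes `K`, `K'` on finite vertex
sets that are not isomorphic as directed simplicial complexes, whose symmetrizations
are isomorphic as abstract simplicial complexes, and such that the number of ordered
pairs `(σ, τ)` of 2-simplices with `d_0 σ = d_2 τ` differs between `K` and `K'`. -/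
theorem d0d2_count_not_factor_through_symmetrization :
    ∃ (n n' : ℕ) (K : Finset (List (Fin n))) (K' : Finset (List (Fin n'))),
      IsDirComplex K ∧ IsDirComplex K' ∧
      (¬ ∃ ψ : Fin n ≃ Fin n', ∀ σ : List (Fin n), σ ∈ K ↔ σ.map ψ ∈ K') ∧
      (∃ φ : Fin n ≃ Fin n', ∀ s : Finset (Fin n),
        s ∈ symmetrization K ↔ s.image φ ∈ symmetrization K') ∧
      d0d2PairCount K ≠ d0d2PairCount K' := by
  refine ⟨3, 3, triangle, triangleWithRotation, isDirComplex_triangle,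
    isDirComplex_triangleWithRotation, not_dirIso_triangle_triangleWithRotation,
    ⟨Equiv.refl _, fun s => ?_⟩, ?_⟩
  · simp [symmetrization_triangleWithRotation]
  · simp [d0d2PairCount_triangle, d0d2PairCount_triangleWithRotation]
end
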